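/- Let J be a finite nonempty index set and φ_j an fPIL formula over a finite set of ports P for each j ∈ J. Then ⊎_{j∈J} φ_j ≡ (⊗_{j∈J} ~φ_j) ⊗ (⋁f_{j∈J} φ_j) as fPCL formulas. -/

import Mathlib

/-- A De Morgan algebra: a bounded distributive lattice equipped with a
complement map satisfying involution and the De Morgan laws. -/
class DeMorganAlg (K : Type) extends DistribLattice K, BoundedOrder K where
  compl : K → K
  compl_compl : ∀ k : K, compl (compl k) = k
  compl_sup : ∀ k k' : K, compl (k ⊔ k') = compl k ⊓ compl k'
  compl_inf : ∀ k k' : K, compl (k ⊓ k') = compl k ⊔ compl k'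

/-- fPIL formulas over the set of ports `P`. -/
inductive fPIL (P : Type) : Type where
  | tt : fPIL P
  | port : P → fPIL P
  | fnot : fPIL P → fPIL P
  | fdisj : fPIL P → fPIL P → fPIL P

/-- Fuzzy conjunction of fPIL formulas. -/
def fPIL.fconj {P : Type} (φ₁ φ₂ : fPIL P) : fPIL P :=
  .fnot (.fdisj (.fnot φ₁) (.fnot φ₂))

/-- The fPIL formula `false`. -/
def fPIL.ff {P : Type} : fPIL P := .fnot .tt

/-- K-fuzzy interactions on `P`: maps `a : P → K` with `a p ≠ 0` for some port `p`. -/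
def fI (P K : Type) [DeMorganAlg K] : Type := {a : P → K // ∃ p : P, a p ≠ ⊥}

/-- Semantics of fPIL formulas. -/
def fPIL.sem {P K : Type} [DeMorganAlg K] : fPIL P → fI P K → K
  | .tt, _ => ⊤
  | .port p, a => a.1 p
  | .fnot φ, a => DeMorganAlg.compl (φ.sem a)
  | .fdisj φ₁ φ₂, a => φ₁.sem a ⊔ φ₂.sem a

/-- Equivalence of fPIL formulas: equal semantics over every De Morgan algebra
and every fuzzy interaction. -/
def pilEquiv {P : Type} (φ₁ φ₂ : fPIL P) : Prop :=
  ∀ (K : Type) [DeMorganAlg K] (a : fI P K), φ₁.sem a = φ₂.sem a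
noncomputable instance {P K : Type} [DeMorganAlg K] : DecidableEq (fI P K) :=
  Classical.decEq _

/-- fPCL formulas over the set of ports `P`. -/
inductive fPCL (P : Type) : Type where
  | pil : fPIL P → fPCL P
  | cneg : fPCL P → fPCL P
  | oplus : fPCL P → fPCL P → fPCL P
  | coal : fPCL P → fPCL P → fPCL P

/-- Fuzzy conjunction `⊗` of fPCL formulas. -/
def fPCL.otimes {P : Type} (ζ₁ ζ₂ : fPCL P) : fPCL P :=
  .cneg (.oplus (.cneg ζ₁) (.cneg ζ₂))

/-- The closure operator `~ζ := ζ ⊎ true`. -/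
def fPCL.closure {P : Type} (ζ : fPCL P) : fPCL P := .coal ζ (.pil .tt)

/-- Semantics of fPCL formulas on finite sets of fuzzy interactions. -/
noncomputable def fPCL.sem {P K : Type} [DeMorganAlg K] :
    fPCL P → Finset (fI P K) → K
  | .pil φ, γ => γ.inf fun a => φ.sem a
  | .cneg ζ, γ => DeMorganAlg.compl (ζ.sem γ)
  | .oplus ζ₁ ζ₂, γ => ζ₁.sem γ ⊔ ζ₂.sem γ
  | .coal ζ₁ ζ₂, γ =>
      ((γ.powerset ×ˢ γ.powerset).filter fun q =>
          q.1.Nonempty ∧ q.2.Nonempty ∧ q.1 ∪ q.2 = γ).sup fun q =>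
        ζ₁.sem q.1 ⊓ ζ₂.sem q.2

/-- Equivalence of fPCL formulas: equal semantics over every De Morgan algebra
and every nonempty finite set of fuzzy interactions. -/
def pclEquiv {P : Type} (ζ₁ ζ₂ : fPCL P) : Prop :=
  ∀ (K : Type) [DeMorganAlg K] (γ : Finset (fI P K)), γ.Nonempty →
    ζ₁.sem γ = ζ₂.sem γ
/-- Iterated fuzzy disjunction `⋁f_{j∈Fin (n+1)} φ j` of fPIL formulas over the
finite nonempty index set `Fin (n+1)`. -/
def fPIL.bigDisj {P : Type} : (n : ℕ) → (Fin (n + 1) → fPIL P) → fPIL P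
  | 0, φ => φ 0
  | n + 1, φ => .fdisj (fPIL.bigDisj n fun i => φ i.castSucc) (φ (Fin.last (n + 1)))

/-- Iterated fuzzy conjunction `⋀f_{j∈Fin (n+1)} φ j` of fPIL formulas. -/
def fPIL.bigConj {P : Type} : (n : ℕ) → (Fin (n + 1) → fPIL P) → fPIL P
  | 0, φ => φ 0
  | n + 1, φ => fPIL.fconj (fPIL.bigConj n fun i => φ i.castSucc) (φ (Fin.last (n + 1)))

/-- Iterated coalescing `⊎_{j∈Fin (n+1)} ζ j` of fPCL formulas. -/
def fPCL.bigCoal {P : Type} : (n : ℕ) → (Fin (n + 1) → fPCL P) → fPCL P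
  | 0, ζ => ζ 0
  | n + 1, ζ => .coal (fPCL.bigCoal n fun i => ζ i.castSucc) (ζ (Fin.last (n + 1)))

/-- Iterated fuzzy conjunction `⊗_{j∈Fin (n+1)} ζ j` of fPCL formulas. -/
def fPCL.bigOtimes {P : Type} : (n : ℕ) → (Fin (n + 1) → fPCL P) → fPCL P
  | 0, ζ => ζ 0
  | n + 1, ζ => (fPCL.bigOtimes n fun i => ζ i.castSucc).otimes (ζ (Fin.last (n + 1)))

/-- Iterated fuzzy disjunction `⊕_{j∈Fin (n+1)} ζ j` of fPCL formulas. -/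
def fPCL.bigOplus {P : Type} : (n : ℕ) → (Fin (n + 1) → fPCL P) → fPCL P
  | 0, ζ => ζ 0
  | n + 1, ζ => .oplus (fPCL.bigOplus n fun i => ζ i.castSucc) (ζ (Fin.last (n + 1)))
/-!
Unfolding the iterated coalescing, `⊎_j φ_j` evaluated at `γ` is the join, over all covers
`(γ_j)_j` of `γ` by nonempty subsets, of `⋀_j ⋀_{a ∈ γ_j} φ_j(a)`, while the right-hand side
evaluates to `(⋀_j ⋁_{a ∈ γ} φ_j(a)) ⊓ ⋀_{a ∈ γ} ⋁_j φ_j(a)`. Each term of the join lies below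
both meets, as each `γ_j` has a point and each point of `γ` lies in some `γ_j`. Conversely,
distributivity expands the right-hand side into a join over the choices of a witness
`w_j ∈ γ` for each `j` and a label `l(a)` for each `a ∈ γ`, and such a term is below the term
of the cover `γ_j = {w_j} ∪ l⁻¹(j)`.
-/

open Finset

section Fin

variable {α : Type*} {n : ℕ}

lemma Fin.inf_univ_castSucc [SemilatticeInf α] [OrderTop α] (f : Fin (n + 1) → α) :
    univ.inf f = (univ.inf fun i : Fin n => f i.castSucc) ⊓ f (Fin.last n) := by
  rw [Fin.univ_castSuccEmb, inf_cons, inf_map, inf_comm]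
  rfl

lemma Fin.sup_univ_castSucc [SemilatticeSup α] [OrderBot α] (f : Fin (n + 1) → α) :
    univ.sup f = (univ.sup fun i : Fin n => f i.castSucc) ⊔ f (Fin.last n) :=
  Fin.inf_univ_castSucc (α := αᵒᵈ) f

end Fin

section Covers

variable {α ι K : Type*} [DecidableEq α]

def coverPairs (s : Finset α) : Finset (Finset α × Finset α) :=
  (s.powerset ×ˢ s.powerset).filter fun q => q.1.Nonempty ∧ q.2.Nonempty ∧ q.1 ∪ q.2 = s

lemma mem_coverPairs {s : Finset α} {q : Finset α × Finset α} :
    q ∈ coverPairs s ↔ q.1.Nonempty ∧ q.2.Nonempty ∧ q.1 ∪ q.2 = s := by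
  simp only [coverPairs, mem_filter, mem_product, mem_powerset, and_iff_right_iff_imp]
  rintro ⟨-, -, rfl⟩
  exact ⟨subset_union_left, subset_union_right⟩

variable [Fintype ι] [DecidableEq ι]

def covers (ι : Type*) [Fintype ι] [DecidableEq ι] (s : Finset α) : Finset (ι → Finset α) :=
  (Fintype.piFinset fun _ : ι => s.powerset).filter fun c =>
    (∀ j, (c j).Nonempty) ∧ univ.sup c = s

lemma mem_covers {s : Finset α} {c : ι → Finset α} :
    c ∈ covers ι s ↔ (∀ j, (c j).Nonempty) ∧ univ.sup c = s := by
  simp only [covers, mem_filter, Fintype.mem_piFinset, mem_powerset, and_iff_right_iff_imp]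
  rintro ⟨-, rfl⟩ j
  exact le_sup (f := c) (mem_univ j)

lemma subset_of_mem_covers {s : Finset α} {c : ι → Finset α} (hc : c ∈ covers ι s) (j : ι) :
    c j ⊆ s :=
  (mem_covers.1 hc).2 ▸ le_sup (f := c) (mem_univ j)

lemma insert_filter_mem_covers {s : Finset α} {w : ι → α} (hw : ∀ j, w j ∈ s)
    (l : ∀ a ∈ s, ι) :
    (fun j => insert (w j) {a ∈ s | ∃ h : a ∈ s, l a h = j}) ∈ covers ι s := by
  refine mem_covers.2 ⟨fun j => insert_nonempty _ _, subset_antisymm ?_ fun a ha => ?_⟩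
  · refine Finset.sup_le fun j _ => insert_subset (hw j) (filter_subset _ _)
  · exact mem_sup.2 ⟨l a ha, mem_univ _, mem_insert_of_mem (mem_filter.2 ⟨ha, ha, rfl⟩)⟩

lemma sup_covers_le [Lattice K] [BoundedOrder K] (f : ι → α → K) (s : Finset α) :
    ((covers ι s).sup fun c => univ.inf fun j => (c j).inf (f j)) ≤
      (univ.inf fun j => s.sup (f j)) ⊓ s.inf fun a => univ.sup fun j => f j a := by
  refine Finset.sup_le fun c hc =>
    le_inf (Finset.le_inf fun j _ => ?_) (Finset.le_inf fun a ha => ?_)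
  · obtain ⟨a, ha⟩ := (mem_covers.1 hc).1 j
    exact (inf_le (mem_univ j)).trans ((inf_le ha).trans (le_sup (subset_of_mem_covers hc j ha)))
  · rw [← (mem_covers.1 hc).2] at ha
    obtain ⟨j, -, hj⟩ := mem_sup.1 ha
    exact ((inf_le (mem_univ j)).trans (inf_le hj)).trans (le_sup (mem_univ j))

lemma le_sup_covers [DistribLattice K] [BoundedOrder K] (f : ι → α → K) (s : Finset α) :
    (univ.inf fun j => s.sup (f j)) ⊓ (s.inf fun a => univ.sup fun j => f j a) ≤
      (covers ι s).sup fun c => univ.inf fun j => (c j).inf (f j) := by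
  rw [inf_sup univ (fun _ => s) f, inf_sup s (fun _ => univ) fun a j => f j a, sup_inf_sup]
  refine Finset.sup_le fun ⟨w, l⟩ hwl => ?_
  have hw : ∀ j, w j (mem_univ j) ∈ s := fun j =>
    mem_pi.1 (mem_product.1 hwl).1 j (mem_univ j)
  refine le_trans ?_ (le_sup (insert_filter_mem_covers hw l))
  refine Finset.le_inf fun j _ => Finset.le_inf fun a ha => ?_
  rcases mem_insert.1 ha with rfl | ha
  · exact inf_le_left.trans (inf_le (mem_attach _ ⟨j, mem_univ j⟩))
  · obtain ⟨-, has, rfl⟩ := mem_filter.1 ha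
    exact inf_le_right.trans (inf_le (mem_attach s ⟨a, has⟩))

theorem sup_covers_eq [DistribLattice K] [BoundedOrder K] (f : ι → α → K) (s : Finset α) :
    ((covers ι s).sup fun c => univ.inf fun j => (c j).inf (f j)) =
      (univ.inf fun j => s.sup (f j)) ⊓ s.inf fun a => univ.sup fun j => f j a :=
  le_antisymm (sup_covers_le f s) (le_sup_covers f s)

end Covers

section Snoc

variable {α : Type*} [DecidableEq α] {n : ℕ}

lemma snoc_mem_covers {s t : Finset α} {c : Fin (n + 1) → Finset α} (hc : c ∈ covers _ s)
    (ht : t.Nonempty) : (Fin.snoc c t : Fin (n + 2) → Finset α) ∈ covers _ (s ∪ t) := by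
  obtain ⟨hne, hsup⟩ := mem_covers.1 hc
  refine mem_covers.2
    ⟨fun j => Fin.lastCases (by simpa using ht) (fun i => by simpa using hne i) j, ?_⟩
  rw [Fin.sup_univ_castSucc]
  simp [hsup]

lemma sup_init_union_last {s : Finset α} {c : Fin (n + 1) → Finset α} (hc : c ∈ covers _ s) :
    univ.sup (Fin.init c) ∪ c (Fin.last n) = s :=
  (Fin.sup_univ_castSucc c).symm.trans (mem_covers.1 hc).2

end Snoc

namespace fPCL

variable {P K : Type} [DeMorganAlg K]

@[simp]
lemma sem_pil (φ : fPIL P) (γ : Finset (fI P K)) : (pil φ).sem γ = γ.inf φ.sem := rfl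

lemma sem_coal (ζ₁ ζ₂ : fPCL P) (γ : Finset (fI P K)) :
    (coal ζ₁ ζ₂).sem γ = (coverPairs γ).sup fun q => ζ₁.sem q.1 ⊓ ζ₂.sem q.2 := rfl

@[simp]
lemma sem_otimes (ζ₁ ζ₂ : fPCL P) (γ : Finset (fI P K)) :
    (ζ₁.otimes ζ₂).sem γ = ζ₁.sem γ ⊓ ζ₂.sem γ := by
  simp [otimes, sem, DeMorganAlg.compl_sup, DeMorganAlg.compl_compl]

lemma sem_closure_pil (φ : fPIL P) {γ : Finset (fI P K)} (hγ : γ.Nonempty) :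
    (pil φ).closure.sem γ = γ.sup φ.sem := by
  rw [closure, sem_coal]
  apply le_antisymm
  · refine Finset.sup_le fun q hq => ?_
    obtain ⟨⟨a, ha⟩, -, hunion⟩ := mem_coverPairs.1 hq
    exact inf_le_left.trans ((inf_le ha).trans (le_sup (hunion ▸ subset_union_left ha)))
  · refine Finset.sup_le fun a ha => le_trans ?_ (le_sup (mem_coverPairs (q := ({a}, γ)).2
      ⟨singleton_nonempty a, hγ, union_eq_right.2 (singleton_subset_iff.2 ha)⟩))
    simp [fPIL.sem]

lemma sem_bigOtimes (n : ℕ) (ζ : Fin (n + 1) → fPCL P) (γ : Finset (fI P K)) :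
    (bigOtimes n ζ).sem γ = univ.inf fun j => (ζ j).sem γ := by
  induction n with
  | zero => simp [bigOtimes]
  | succ n ih => rw [bigOtimes, sem_otimes, ih, Fin.inf_univ_castSucc fun j => (ζ j).sem γ]

lemma sem_bigCoal (n : ℕ) (ζ : Fin (n + 1) → fPCL P) {γ : Finset (fI P K)} (hγ : γ.Nonempty) :
    (bigCoal n ζ).sem γ = (covers _ γ).sup fun c => univ.inf fun j => (ζ j).sem (c j) := by
  induction n generalizing γ with
  | zero =>
    have hcov : covers (Fin 1) γ = {fun _ => γ} := by
      ext c
      simp only [mem_covers, Fin.forall_fin_one, univ_unique, Fin.default_eq_zero, sup_singleton,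
        mem_singleton, funext_iff]
      exact and_iff_right_of_imp fun h => h ▸ hγ
    simp [bigCoal, hcov]
  | succ n ih =>
    rw [bigCoal, sem_coal]
    apply le_antisymm
    · refine Finset.sup_le fun q hq => ?_
      obtain ⟨hq₁, hq₂, hunion⟩ := mem_coverPairs.1 hq
      rw [ih _ hq₁, sup_inf_distrib_right]
      refine Finset.sup_le fun c hc =>
        le_of_eq_of_le ?_ (le_sup (hunion ▸ snoc_mem_covers hc hq₂))
      rw [Fin.inf_univ_castSucc (n := n + 1)]
      simp only [Fin.snoc_castSucc, Fin.snoc_last]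
    · refine Finset.sup_le fun c hc => ?_
      have hinit : Fin.init c ∈ covers _ (univ.sup (Fin.init c)) :=
        mem_covers.2 ⟨fun i => (mem_covers.1 hc).1 _, rfl⟩
      have hne : (univ.sup (Fin.init c)).Nonempty :=
        ((mem_covers.1 hinit).1 0).mono (le_sup (f := Fin.init c) (mem_univ 0))
      have hpair : (univ.sup (Fin.init c), c (Fin.last _)) ∈ coverPairs γ :=
        mem_coverPairs.2 ⟨hne, (mem_covers.1 hc).1 _, sup_init_union_last hc⟩
      refine le_trans ?_ (le_sup hpair)
      dsimp only
      rw [Fin.inf_univ_castSucc, ih _ hne]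
      exact inf_le_inf_right _
        (le_sup (f := fun c => univ.inf fun j => (ζ j.castSucc).sem (c j)) hinit)

end fPCL

namespace fPIL

variable {P K : Type} [DeMorganAlg K]

lemma sem_bigDisj (n : ℕ) (φ : Fin (n + 1) → fPIL P) (a : fI P K) :
    (bigDisj n φ).sem a = univ.sup fun j => (φ j).sem a := by
  induction n with
  | zero => simp [bigDisj]
  | succ n ih =>
    rw [bigDisj, sem, ih, Fin.sup_univ_castSucc fun j => (φ j).sem a]

end fPIL

theorem fpcl_bigCoal_eq_general {P : Type} (n : ℕ) (φ : Fin (n + 1) → fPIL P) :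
    pclEquiv (fPCL.bigCoal n fun j => .pil (φ j))
      ((fPCL.bigOtimes n fun j => (fPCL.pil (φ j)).closure).otimes
        (.pil (fPIL.bigDisj n φ))) := by
  intro K _ γ hγ
  rw [fPCL.sem_bigCoal n _ hγ, fPCL.sem_otimes, fPCL.sem_bigOtimes]
  simp only [fPCL.sem_pil, fPCL.sem_closure_pil _ hγ, funext (fPIL.sem_bigDisj n φ)]
  exact sup_covers_eq (fun j => (φ j).sem) γ

/-- for a finite nonempty index set `J = Fin (n+1)` and fPIL
formulas `φ j`, `⊎_{j∈J} φ_j ≡ (⊗_{j∈J} ~φ_j) ⊗ (⋁f_{j∈J} φ_j)` as fPCL formulas. -/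
theorem fpcl_bigCoal_eq {P : Type} [Fintype P] (n : ℕ) (φ : Fin (n + 1) → fPIL P) :
    pclEquiv (fPCL.bigCoal n fun j => .pil (φ j))
      ((fPCL.bigOtimes n fun j => (fPCL.pil (φ j)).closure).otimes
        (.pil (fPIL.bigDisj n φ))) :=
  fpcl_bigCoal_eq_general n φ
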